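/- Let T ∈ ℝ, let a, b, σ be positive real constants, let g : (−∞,T] → ℝ be a continuous function with g(t) ≥ 0 for all t ≤ T, and let ψ ≥ 0. Then there exists a unique differentiable function φ : (−∞,T] → ℝ such that φ(T) = ψ and φ′(t) = (σ²/2)·φ(t)² + a·φ(t) − (1 + b·g(t)) for all t ≤ T; moreover this solution satisfies φ(t) > 0 for every t < T. -/

import Mathlib

/-!
Clamp the unknown to `[0, M]` inside the vector field. The clamped field is globally Lipschitz
and bounded on `[s, T] × ℝ`, so Picard–Lindelöf gives a solution on every `[s, T]`. For `M`
large the field is positive at heights `≥ M` and at most `-1` at heights `≤ 0`, so, going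
backwards from `φ T = ψ ∈ [0, M]`, the solution stays in `(0, M]` before `T`: the clamp is
invisible and it solves the Riccati equation itself. The Riccati field is Lipschitz on bounded
sets, so solutions with the same final value agree (Gronwall); hence the solutions on the
intervals `[s, T]` are compatible and glue to a solution on `(-∞, T]`.
-/

open Set Filter Topology Metric
open scoped NNReal

section ODE

variable {E : Type*} [NormedAddCommGroup E] [NormedSpace ℝ E]

theorem exists_hasDerivWithinAt_Icc_of_lipschitzWith_of_norm_le [CompleteSpace E]
    {v : ℝ → E → E} {s T : ℝ} (hsT : s ≤ T) {K C : ℝ≥0}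
    (hlip : ∀ t ∈ Icc s T, LipschitzWith K (v t))
    (hcont : ∀ x, ContinuousOn (v · x) (Icc s T))
    (hbound : ∀ t ∈ Icc s T, ∀ x, ‖v t x‖ ≤ C) (x₀ : E) :
    ∃ f : ℝ → E, f T = x₀ ∧
      ∀ t ∈ Icc s T, HasDerivWithinAt f (v t (f t)) (Icc s T) t :=
  IsPicardLindelof.exists_eq_forall_mem_Icc_hasDerivWithinAt₀
    (t₀ := ⟨T, right_mem_Icc.2 hsT⟩) (a := C * (T - s).toNNReal)
    { lipschitzOnWith := fun t ht => (hlip t ht).lipschitzOnWith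
      continuousOn := fun x _ => hcont x
      norm_le := fun t ht x _ => hbound t ht x
      mul_max_le := by simp [hsT] }

theorem eqOn_Icc_of_hasDerivWithinAt_Icc {v : ℝ → E → E}
    (hv : ∀ r, ∃ K, ∀ t, LipschitzOnWith K (v t) (closedBall 0 r))
    {f g : ℝ → E} {s T : ℝ}
    (hf : ∀ t ∈ Icc s T, HasDerivWithinAt f (v t (f t)) (Icc s T) t)
    (hg : ∀ t ∈ Icc s T, HasDerivWithinAt g (v t (g t)) (Icc s T) t)
    (hT : f T = g T) : EqOn f g (Icc s T) := by
  have hf_cont : ContinuousOn f (Icc s T) := fun t ht => (hf t ht).continuousWithinAt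
  have hg_cont : ContinuousOn g (Icc s T) := fun t ht => (hg t ht).continuousWithinAt
  obtain ⟨rf, hrf⟩ := isCompact_Icc.exists_bound_of_continuousOn hf_cont
  obtain ⟨rg, hrg⟩ := isCompact_Icc.exists_bound_of_continuousOn hg_cont
  obtain ⟨K, hK⟩ := hv (max rf rg)
  have left_deriv {h : ℝ → E}
      (hh : ∀ t ∈ Icc s T, HasDerivWithinAt h (v t (h t)) (Icc s T) t)
      (t : ℝ) (ht : t ∈ Ioc s T) : HasDerivWithinAt h (v t (h t)) (Iic t) t :=
    (hh t (Ioc_subset_Icc_self ht)).mono_of_mem_nhdsWithin (Icc_mem_nhdsLE_of_mem ht)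
  exact ODE_solution_unique_of_mem_Icc_left (fun t _ => hK t) hf_cont (left_deriv hf)
    (fun t ht => mem_closedBall_zero_iff.2
      ((hrf t (Ioc_subset_Icc_self ht)).trans (le_max_left _ _)))
    hg_cont (left_deriv hg)
    (fun t ht => mem_closedBall_zero_iff.2
      ((hrg t (Ioc_subset_Icc_self ht)).trans (le_max_right _ _)))
    hT

theorem exists_hasDerivWithinAt_Iic_of_Icc {v : ℝ → E → E} {T : ℝ} {Φ : ℝ → ℝ → E}
    (hΦ : ∀ s ≤ T, ∀ t ∈ Icc s T, HasDerivWithinAt (Φ s) (v t (Φ s t)) (Icc s T) t)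
    (hagree : ∀ s s', s ≤ s' → s' ≤ T → EqOn (Φ s) (Φ s') (Icc s' T)) :
    ∃ φ : ℝ → E, (∀ s ≤ T, EqOn φ (Φ s) (Icc s T)) ∧
      ∀ t ≤ T, HasDerivWithinAt φ (v t (φ t)) (Iic T) t := by
  -- Near `t`, `φ` coincides with `Φ (t - 1)`, whose left endpoint lies strictly before `t`.
  set φ : ℝ → E := fun t => Φ (t - 1) t
  have hφ : ∀ s ≤ T, EqOn φ (Φ s) (Icc s T) := by
    intro s hs u hu
    have h₁ := hagree (min s (u - 1)) (u - 1) (min_le_right _ _) (by linarith [hu.2])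
      ⟨by linarith, hu.2⟩
    have h₂ := hagree (min s (u - 1)) s (min_le_left _ _) hs hu
    exact h₁.symm.trans h₂
  refine ⟨φ, hφ, fun t ht => ?_⟩
  have hnhds : Icc (t - 1) T ∈ 𝓝[Iic T] t :=
    mem_of_superset (inter_mem_nhdsWithin _ (Ioi_mem_nhds (sub_one_lt t)))
      fun u hu => ⟨hu.2.le, hu.1⟩
  exact ((hΦ (t - 1) (by linarith) t ⟨by linarith, ht⟩).mono_of_mem_nhdsWithin hnhds)
    |>.congr_of_eventuallyEq (eventually_of_mem hnhds (hφ (t - 1) (by linarith))) rfl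

end ODE

section Barrier

variable {f d : ℝ → ℝ} {s T : ℝ}

theorem add_mul_sub_le_of_lt_deriv {K r : ℝ} (hr : 0 ≤ r) (hsT : s ≤ T)
    (hf : ∀ x ∈ Icc s T, HasDerivWithinAt f (d x) (Icc s T) x)
    (hd : ∀ x ∈ Ico s T, K ≤ f x → r < d x) (hs : K ≤ f s) : K + r * (T - s) ≤ f T := by
  have hline (x : ℝ) : HasDerivAt (fun x => K + r * (x - s)) r x := by
    simpa using ((hasDerivAt_id x).sub_const s |>.const_mul r).const_add K
  refine image_le_of_deriv_right_lt_deriv_boundary' (by fun_prop)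
    (fun x _ => (hline x).hasDerivWithinAt) (by simpa using hs)
    (fun x hx => (hf x hx).continuousWithinAt)
    (fun x hx => (hf x (Ico_subset_Icc_self hx)).mono_of_mem_nhdsWithin
      (Icc_mem_nhdsGE_of_mem hx))
    (fun x hx hfx => hd x hx ?_) (right_mem_Icc.2 hsT)
  exact hfx ▸ le_add_of_nonneg_right (mul_nonneg hr (sub_nonneg.2 hx.1))

theorem le_of_deriv_pos_above {M : ℝ}
    (hf : ∀ x ∈ Icc s T, HasDerivWithinAt f (d x) (Icc s T) x)
    (hd : ∀ x ∈ Ico s T, M < f x → 0 < d x) (hT : f T ≤ M) :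
    ∀ t ∈ Icc s T, f t ≤ M := by
  intro t ht
  by_contra! hMt
  have := add_mul_sub_le_of_lt_deriv le_rfl ht.2
    (fun x hx => (hf x ⟨ht.1.trans hx.1, hx.2⟩).mono (Icc_subset_Icc_left ht.1))
    (fun x hx hfx => hd x ⟨ht.1.trans hx.1, hx.2⟩ (hMt.trans_le hfx)) le_rfl
  linarith

theorem lt_of_deriv_le_neg_below {K ε : ℝ} (hε : 0 < ε)
    (hf : ∀ x ∈ Icc s T, HasDerivWithinAt f (d x) (Icc s T) x)
    (hd : ∀ x ∈ Ico s T, f x ≤ K → d x ≤ -ε) (hT : K ≤ f T) :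
    ∀ t ∈ Ico s T, K < f t := by
  intro t ht
  by_contra! hKt
  have := add_mul_sub_le_of_lt_deriv (f := -f) (d := -d) (half_pos hε).le ht.2.le
    (fun x hx => (hf x ⟨ht.1.trans hx.1, hx.2⟩).neg.mono (Icc_subset_Icc_left ht.1))
    (fun x hx hfx => by
      rw [Pi.neg_apply, neg_le_neg_iff] at hfx
      rw [Pi.neg_apply]
      linarith [hd x ⟨ht.1.trans hx.1, hx.2⟩ hfx])
    (neg_le_neg hKt)
  rw [Pi.neg_apply] at this
  nlinarith [ht.2]

end Barrier

noncomputable def riccatiField (a b σ : ℝ) (g : ℝ → ℝ) (t x : ℝ) : ℝ :=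
  σ ^ 2 / 2 * x ^ 2 + a * x - (1 + b * g t)

section Riccati

variable {a b σ : ℝ} {g : ℝ → ℝ}

theorem riccatiField_sub_riccatiField (t x y : ℝ) :
    riccatiField a b σ g t x - riccatiField a b σ g t y =
      (σ ^ 2 / 2 * (x + y) + a) * (x - y) := by
  unfold riccatiField; ring

theorem lipschitzOnWith_riccatiField (r t : ℝ) :
    LipschitzOnWith (σ ^ 2 * r + |a|).toNNReal (riccatiField a b σ g t)
      (closedBall 0 r) := by
  refine LipschitzOnWith.of_dist_le_mul fun x hx y hy => ?_
  rw [mem_closedBall_zero_iff, Real.norm_eq_abs] at hx hy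
  have hr : 0 ≤ r := (abs_nonneg x).trans hx
  rw [Real.dist_eq, Real.dist_eq, riccatiField_sub_riccatiField, abs_mul,
    Real.coe_toNNReal _ (by positivity)]
  gcongr
  calc |σ ^ 2 / 2 * (x + y) + a| ≤ σ ^ 2 / 2 * (|x| + |y|) + |a| := by
        grw [abs_add_le, abs_mul, abs_of_nonneg (by positivity : 0 ≤ σ ^ 2 / 2), abs_add_le]
    _ ≤ σ ^ 2 * r + |a| := by nlinarith [sq_nonneg σ]

theorem eqOn_Icc_of_riccati {f h : ℝ → ℝ} {s T : ℝ}
    (hf : ∀ t ∈ Icc s T, HasDerivWithinAt f (riccatiField a b σ g t (f t)) (Icc s T) t)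
    (hh : ∀ t ∈ Icc s T, HasDerivWithinAt h (riccatiField a b σ g t (h t)) (Icc s T) t)
    (hT : f T = h T) : EqOn f h (Icc s T) :=
  eqOn_Icc_of_hasDerivWithinAt_Icc (fun r => ⟨_, lipschitzOnWith_riccatiField r⟩) hf hh hT

theorem exists_riccati_truncated_solution {s T M : ℝ} (hsT : s ≤ T) (hM : 0 ≤ M)
    (hg : ContinuousOn g (Icc s T)) (ψ : ℝ) :
    ∃ f : ℝ → ℝ, f T = ψ ∧ ∀ t ∈ Icc s T,
      HasDerivWithinAt f (riccatiField a b σ g t (projIcc 0 M hM (f t))) (Icc s T) t := by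
  have hQ : ContinuousOn (fun p : ℝ × ℝ => riccatiField a b σ g p.1 p.2)
      (Icc s T ×ˢ Icc 0 M) := by
    have hg₁ : ContinuousOn (fun p : ℝ × ℝ => g p.1) (Icc s T ×ˢ Icc 0 M) :=
      hg.comp continuousOn_fst fun p hp => (mem_prod.1 hp).1
    exact (Continuous.continuousOn (by fun_prop)).sub (continuousOn_const.add
      (continuousOn_const.mul hg₁))
  obtain ⟨C, hC⟩ := (isCompact_Icc.prod isCompact_Icc).exists_bound_of_continuousOn hQ
  have hclamp : LipschitzWith 1 (fun x => (projIcc 0 M hM x : ℝ)) :=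
    LipschitzWith.of_dist_le_mul fun x y => by
      simpa [Real.dist_eq] using abs_projIcc_sub_projIcc hM
  refine exists_hasDerivWithinAt_Icc_of_lipschitzWith_of_norm_le hsT
    (fun t _ => lipschitzOnWith_univ.1 <|
      (lipschitzOnWith_riccatiField M t).comp hclamp.lipschitzOnWith
        fun x _ => mem_closedBall_zero_iff.2 ?_)
    (fun x => ?_) (fun t ht x => (hC (t, _) ⟨ht, (projIcc 0 M hM x).2⟩).trans
      (Real.le_coe_toNNReal C)) ψ
  · have := (projIcc 0 M hM x).2
    rw [Real.norm_eq_abs, abs_le]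
    constructor <;> linarith [this.1, this.2]
  · unfold riccatiField
    fun_prop

theorem exists_riccati_solution_Icc (ha : 0 < a) (hb : 0 ≤ b) {ψ s T : ℝ} (hψ : 0 ≤ ψ)
    (hsT : s ≤ T) (hg : ContinuousOn g (Icc s T)) (hg_nonneg : ∀ t ∈ Icc s T, 0 ≤ g t) :
    ∃ f : ℝ → ℝ, f T = ψ ∧
      (∀ t ∈ Icc s T, HasDerivWithinAt f (riccatiField a b σ g t (f t)) (Icc s T) t) ∧
      ∀ t ∈ Ico s T, 0 < f t := by
  obtain ⟨Γ, hΓ⟩ := isCompact_Icc.exists_bound_of_continuousOn hg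
  set M := max ψ ((2 + b * Γ) / a)
  have hM : 0 ≤ M := hψ.trans (le_max_left _ _)
  obtain ⟨f, hfT, hf⟩ :=
    exists_riccati_truncated_solution (a := a) (b := b) (σ := σ) hsT hM hg ψ
  have hf_le : ∀ t ∈ Icc s T, f t ≤ M := by
    refine le_of_deriv_pos_above hf (fun x hx hMx => ?_) (hfT ▸ le_max_left _ _)
    have hgx : b * g x ≤ b * Γ := mul_le_mul_of_nonneg_left
      ((le_abs_self _).trans (hΓ x (Ico_subset_Icc_self hx))) hb
    have haM : 2 + b * Γ ≤ a * M := (div_le_iff₀' ha).1 (le_max_right _ _)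
    rw [projIcc_of_right_le _ hMx.le]
    unfold riccatiField
    nlinarith [sq_nonneg σ, sq_nonneg M]
  have hf_pos : ∀ t ∈ Ico s T, 0 < f t := by
    refine lt_of_deriv_le_neg_below one_pos hf (fun x hx hx0 => ?_) (hfT ▸ hψ)
    rw [projIcc_of_le_left _ hx0]
    unfold riccatiField
    nlinarith [hg_nonneg x (Ico_subset_Icc_self hx)]
  refine ⟨f, hfT, fun t ht => ?_, hf_pos⟩
  have hf_nonneg : 0 ≤ f t := by
    rcases ht.2.lt_or_eq with htT | rfl
    · exact (hf_pos t ⟨ht.1, htT⟩).le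
    · exact hfT ▸ hψ
  simpa [projIcc_of_mem hM ⟨hf_nonneg, hf_le t ht⟩] using hf t ht

theorem exists_riccati_solution_Iic (ha : 0 < a) (hb : 0 ≤ b) {ψ T : ℝ} (hψ : 0 ≤ ψ)
    (hg : ContinuousOn g (Iic T)) (hg_nonneg : ∀ t ≤ T, 0 ≤ g t) :
    ∃ φ : ℝ → ℝ, φ T = ψ ∧
      (∀ t ≤ T, HasDerivWithinAt φ (riccatiField a b σ g t (φ t)) (Iic T) t) ∧
      ∀ t < T, 0 < φ t := by
  choose! Φ hΦT hΦ hΦ_pos using fun s (hs : s ≤ T) =>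
    exists_riccati_solution_Icc (σ := σ) ha hb hψ hs (hg.mono Icc_subset_Iic_self)
      fun t ht => hg_nonneg t ht.2
  obtain ⟨φ, hφΦ, hφ⟩ := exists_hasDerivWithinAt_Iic_of_Icc hΦ fun s s' hss' hs' =>
    eqOn_Icc_of_riccati
      (fun t ht => (hΦ s (hss'.trans hs') t ⟨hss'.trans ht.1, ht.2⟩).mono
        (Icc_subset_Icc_left hss'))
      (hΦ s' hs') ((hΦT s (hss'.trans hs')).trans (hΦT s' hs').symm)
  refine ⟨φ, (hφΦ T le_rfl ⟨le_rfl, le_rfl⟩).trans (hΦT T le_rfl), hφ, fun t ht => ?_⟩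
  rw [hφΦ (t - 1) (by linarith) ⟨by linarith, ht.le⟩]
  exact hΦ_pos (t - 1) (by linarith) t ⟨by linarith, ht⟩

end Riccati

theorem riccati_existence_uniqueness_positivity
    (T a b σ ψ : ℝ) (ha : 0 < a) (hb : 0 < b) (hψ : 0 ≤ ψ)
    (g : ℝ → ℝ) (hg_cont : ContinuousOn g (Set.Iic T))
    (hg_nonneg : ∀ t ≤ T, 0 ≤ g t) :
    ∃ φ : ℝ → ℝ,
      (φ T = ψ ∧
        ∀ t ≤ T, HasDerivWithinAt φ
          (σ ^ 2 / 2 * (φ t) ^ 2 + a * φ t - (1 + b * g t)) (Set.Iic T) t) ∧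
      (∀ t < T, 0 < φ t) ∧
      (∀ ψ' : ℝ → ℝ,
        (ψ' T = ψ ∧
          ∀ t ≤ T, HasDerivWithinAt ψ'
            (σ ^ 2 / 2 * (ψ' t) ^ 2 + a * ψ' t - (1 + b * g t)) (Set.Iic T) t) →
        ∀ t ≤ T, ψ' t = φ t) := by
  obtain ⟨φ, hφT, hφ, hφ_pos⟩ :=
    exists_riccati_solution_Iic (σ := σ) ha hb.le hψ hg_cont hg_nonneg
  refine ⟨φ, ⟨hφT, hφ⟩, hφ_pos, fun ψ' ⟨hψ'T, hψ'⟩ t ht => ?_⟩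
  exact eqOn_Icc_of_riccati (fun u hu => (hψ' u hu.2).mono Icc_subset_Iic_self)
    (fun u hu => (hφ u hu.2).mono Icc_subset_Iic_self) (hψ'T.trans hφT.symm) ⟨le_rfl, ht⟩
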